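/- arXiv:2004.05143 — 3 statements merged into one kernel-verified Lean document; each statement's English description precedes it below -/
import Mathlib

section
/- Let A be a real n×n Hurwitz matrix and C a real m×n matrix. Then the improper integral W_o = ∫_0^∞ exp(Aᵀ t) Cᵀ C exp(A t) dt converges entrywise, and W_o satisfies the Lyapunov equation Aᵀ W_o + W_o A + Cᵀ C = 0. -/
open MeasureTheory NormedSpace Set Matrix

/-- A real square matrix is Hurwitz if every eigenvalue of `A`
(viewed as a complex matrix) has negative real part. -/
def IsHurwitz {n : ℕ} (A : Matrix (Fin n) (Fin n) ℝ) : Prop :=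
  ∀ μ ∈ spectrum ℂ (A.map Complex.ofReal), μ.re < 0

/-- The observability Gramian `W_o = ∫_0^∞ exp(Aᵀ t) Cᵀ C exp(A t) dt`,
defined entrywise. -/
noncomputable def obsGram {n m : ℕ} (A : Matrix (Fin n) (Fin n) ℝ)
    (C : Matrix (Fin m) (Fin n) ℝ) : Matrix (Fin n) (Fin n) ℝ :=
  Matrix.of fun i j => ∫ t in Ici (0 : ℝ), (exp (t • Aᵀ) * Cᵀ * C * exp (t • A)) i j

/-!
On the generalized eigenspace of `A` for an eigenvalue `μ`, `exp (t • A)` acts as `exp (t μ)`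
times a polynomial in `t`, so for a Hurwitz matrix every entry of `exp (t • A)` is
`O(exp (-b t))` for some `b > 0`. For any `Q` (here `Cᵀ * C`) the integrand
`g t = exp (t • Aᵀ) * Q * exp (t • A)` is then `O(exp (-2 b t))`, hence integrable on `(0, ∞)`
with limit `0` at infinity, and integrating `g' = Aᵀ * g + g * A` over `(0, ∞)` gives
`Aᵀ * W + W * A = -g 0 = -Q` for its integral `W`.
-/

open Filter Asymptotics Topology Finset
open scoped Nat

theorem Asymptotics.IsBigO.smul_const {α E : Type*} [NormedAddCommGroup E] [NormedSpace ℝ E]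
    {l : Filter α} {f g : α → ℝ} (h : f =O[l] g) (v : E) :
    (fun x => f x • v) =O[l] g := by
  simpa using h.smul (isBigO_const_const v (one_ne_zero' ℝ) l)

theorem Set.Finite.exists_pos_forall_re_lt_neg {s : Set ℂ} (hs : s.Finite)
    (h : ∀ μ ∈ s, μ.re < 0) : ∃ b > 0, ∀ μ ∈ s, μ.re < -b := by
  have hev : ∀ᶠ b in 𝓝[>] (0 : ℝ), ∀ μ ∈ s, μ.re < -b :=
    (hs.eventually_all).mpr fun μ hμ =>
      Filter.Eventually.mono (nhdsWithin_le_nhds (Iio_mem_nhds (neg_pos.mpr (h μ hμ))))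
        fun _ hb => lt_neg_of_lt_neg hb
  obtain ⟨b, hbs, hb⟩ := (hev.and self_mem_nhdsWithin).exists
  exact ⟨b, hb, hbs⟩

section ImproperIntegral

variable {E : Type*} [NormedAddCommGroup E]

theorem integrableOn_Ioi_of_isBigO_exp_neg {f : ℝ → E} {a b : ℝ} (hb : 0 < b)
    (hf : ContinuousOn f (Ici a)) (ho : f =O[atTop] fun x => Real.exp (-b * x)) :
    IntegrableOn f (Ioi a) :=
  (integrableOn_Ici_iff_integrableOn_Ioi).mp <|
    (hf.locallyIntegrableOn measurableSet_Ici).integrableOn_of_isBigO_atTop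
    ho ⟨Ioi b, Ioi_mem_atTop b, exp_neg_integrableOn_Ioi b hb⟩

theorem map_integral_Ioi_eq_neg_of_hasDerivAt [NormedSpace ℝ E] [CompleteSpace E]
    (L : E →L[ℝ] E) {g : ℝ → E} {a : ℝ} (hderiv : ∀ t, HasDerivAt g (L (g t)) t) (hint : IntegrableOn g (Ioi a))
    (hlim : Tendsto g atTop (𝓝 0)) : L (∫ t in Ioi a, g t) = -g a := by
  rw [← L.integral_comp_comm hint, integral_Ioi_of_hasDerivAt_of_tendsto
    (hderiv a).continuousAt.continuousWithinAt (fun t _ => hderiv t) (L.integrable_comp hint) hlim,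
    zero_sub]

end ImproperIntegral

section BanachAlgebra

variable {𝔸 : Type*} [NormedRing 𝔸] [NormedAlgebra ℝ 𝔸] [CompleteSpace 𝔸]

theorem hasDerivAt_exp_smul_mul_mul_exp_smul (B Q A : 𝔸) (t : ℝ) :
    HasDerivAt (fun s : ℝ => exp (s • B) * Q * exp (s • A))
      (B * (exp (t • B) * Q * exp (t • A)) + exp (t • B) * Q * exp (t • A) * A) t :=
  (((hasDerivAt_exp_smul_const' B t).mul_const Q).mul (hasDerivAt_exp_smul_const A t)).congr_deriv
    (by noncomm_ring)

theorem integrableOn_and_lyapunov_of_isBigO_exp_smul {A B : 𝔸} {b : ℝ} (hb : 0 < b)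
    (hA : (fun t : ℝ => exp (t • A)) =O[atTop] fun t => Real.exp (-b * t))
    (hB : (fun t : ℝ => exp (t • B)) =O[atTop] fun t => Real.exp (-b * t)) (Q : 𝔸) :
    IntegrableOn (fun t : ℝ => exp (t • B) * Q * exp (t • A)) (Ioi (0 : ℝ)) ∧
      B * (∫ t in Ioi (0 : ℝ), exp (t • B) * Q * exp (t • A)) +
        (∫ t in Ioi (0 : ℝ), exp (t • B) * Q * exp (t • A)) * A + Q = 0 := by
  set g := fun t : ℝ => exp (t • B) * Q * exp (t • A)
  let L : 𝔸 →L[ℝ] 𝔸 := ContinuousLinearMap.mul ℝ 𝔸 B + (ContinuousLinearMap.mul ℝ 𝔸).flip A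
  have hderiv (t : ℝ) : HasDerivAt g (L (g t)) t :=
    hasDerivAt_exp_smul_mul_mul_exp_smul B Q A t
  have hdecay : g =O[atTop] fun t => Real.exp (-(2 * b) * t) :=
    ((hB.mul (isBigO_const_const Q one_ne_zero atTop)).mul hA).congr_right fun t => by
      rw [mul_one, ← Real.exp_add]
      ring_nf
  have hint : IntegrableOn g (Ioi 0) := integrableOn_Ioi_of_isBigO_exp_neg (by positivity)
    (continuous_iff_continuousAt.mpr fun t => (hderiv t).continuousAt).continuousOn hdecay
  have hlim : Tendsto g atTop (𝓝 0) := hdecay.trans_tendsto <|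
    Real.tendsto_exp_atBot.comp (tendsto_id.const_mul_atTop_of_neg (by linarith))
  refine ⟨hint, ?_⟩
  have hg0 : g 0 = Q := by simp [g]
  have hW := map_integral_Ioi_eq_neg_of_hasDerivAt L hderiv hint hlim
  simp only [L, _root_.add_apply, ContinuousLinearMap.mul_apply',
    ContinuousLinearMap.flip_apply, hg0] at hW
  rw [hW, neg_add_cancel]

end BanachAlgebra

section MatrixExponential

/- An auxiliary choice: any norm making square matrices a Banach algebra would do, and the
final matrix statement does not depend on it. -/
attribute [local instance] Matrix.linftyOpNormedAddCommGroup Matrix.linftyOpNormedSpace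
  Matrix.linftyOpNormedRing Matrix.linftyOpNormedAlgebra

theorem Matrix.isBigO_of_forall_isBigO_apply {α ι κ : Type*} [Fintype ι] [Fintype κ] {l : Filter α}
    {f : α → Matrix ι κ ℝ} {g : α → ℝ} (h : ∀ i j, (fun x => f x i j) =O[l] g) : f =O[l] g := by
  classical
  have hsum (x : α) : f x = ∑ i, ∑ j, f x i j • single i j (1 : ℝ) := by
    simpa only [smul_single, smul_eq_mul, mul_one] using matrix_eq_sum_single (f x)
  rw [funext hsum]
  exact IsBigO.fun_sum fun i _ => IsBigO.fun_sum fun j _ => (h i j).smul_const _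

variable {ι : Type*} [Fintype ι] [DecidableEq ι]

theorem Matrix.exp_mulVec_eq_sum_of_pow_mulVec_eq_zero {N : Matrix ι ι ℂ} {w : ι → ℂ} {d : ℕ}
    (hN : N ^ d *ᵥ w = 0) : exp N *ᵥ w = ∑ j ∈ range d, (j ! : ℂ)⁻¹ • (N ^ j *ᵥ w) := by
  have hsum : HasSum (fun j => ((j ! : ℂ)⁻¹ • N ^ j) *ᵥ w) (exp N *ᵥ w) :=
    (exp_series_hasSum_exp' (𝕂 := ℂ) N).map (mulVec.addMonoidHomLeft w)
      (continuous_id.matrix_mulVec continuous_const)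
  simp only [smul_mulVec] at hsum
  refine hsum.unique (hasSum_sum_of_ne_finset_zero fun j hj => ?_)
  obtain ⟨k, rfl⟩ := Nat.exists_eq_add_of_le (not_lt.mp (mem_range.not.mp hj))
  rw [add_comm, pow_add, ← mulVec_mulVec, hN, mulVec_zero, smul_zero]

theorem Matrix.isBigO_exp_smul_mulVec_of_pow_mulVec_eq_zero {N : Matrix ι ι ℂ} {w : ι → ℂ}
    {d : ℕ} (hN : N ^ d *ᵥ w = 0) {δ : ℝ} (hδ : 0 < δ) :
    (fun t : ℝ => exp (t • N) *ᵥ w) =O[atTop] fun t => Real.exp (δ * t) := by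
  have hpow (t : ℝ) (j : ℕ) : (t • N) ^ j *ᵥ w = t ^ j • (N ^ j *ᵥ w) := by
    rw [smul_pow, smul_mulVec]
  have hexp (t : ℝ) :
      exp (t • N) *ᵥ w = ∑ j ∈ range d, (j ! : ℂ)⁻¹ • (t ^ j • (N ^ j *ᵥ w)) := by
    rw [exp_mulVec_eq_sum_of_pow_mulVec_eq_zero (d := d) (by rw [hpow, hN, smul_zero])]
    simp_rw [hpow]
  simp_rw [hexp]
  exact IsBigO.fun_sum fun j _ =>
    ((isLittleO_pow_exp_pos_mul_atTop j hδ).isBigO.smul_const (N ^ j *ᵥ w)).const_smul_left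
      (j ! : ℂ)⁻¹

theorem Matrix.exp_smul_eq_exp_mul_smul_exp_smul_sub (M : Matrix ι ι ℂ) (μ : ℂ) (t : ℝ) :
    exp (t • M) = Complex.exp (t * μ) • exp (t • (M - μ • 1)) := by
  have hscalar : t • M = algebraMap ℂ (Matrix ι ι ℂ) (t * μ) + t • (M - μ • 1) := by
    rw [Algebra.algebraMap_eq_smul_one, smul_sub, ← smul_assoc, Complex.real_smul]
    abel
  have hexp_scalar : exp (algebraMap ℂ (Matrix ι ι ℂ) (t * μ))
      = algebraMap ℂ (Matrix ι ι ℂ) (Complex.exp (t * μ)) := by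
    rw [Complex.exp_eq_exp_ℂ]
    exact (algebraMap_exp_comm _).symm
  rw [hscalar, exp_add_of_commute _ _ (Algebra.commute_algebraMap_left _ _), hexp_scalar,
    ← Algebra.smul_def]

theorem Matrix.isBigO_exp_smul_mulVec_of_mem_maxGenEigenspace {M : Matrix ι ι ℂ} {μ : ℂ}
    {w : ι → ℂ} (hw : w ∈ Module.End.maxGenEigenspace (toLin' M) μ) {c : ℝ} (hμ : μ.re < c) :
    (fun t : ℝ => exp (t • M) *ᵥ w) =O[atTop] fun t => Real.exp (c * t) := by
  obtain ⟨d, hd⟩ := (Module.End.mem_maxGenEigenspace _ _ _).mp hw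
  have hN : (M - μ • 1) ^ d *ᵥ w = 0 := by
    rwa [← toLin'_apply, toLin'_pow, map_sub, map_smul, toLin'_one]
  have hscalar : (fun t : ℝ => Complex.exp (t * μ)) =O[atTop] fun t => Real.exp (μ.re * t) :=
    isBigO_of_le _ fun t => by simp [Complex.norm_exp, mul_comm]
  have hprod := hscalar.smul (isBigO_exp_smul_mulVec_of_pow_mulVec_eq_zero hN (sub_pos.mpr hμ))
  simp_rw [exp_smul_eq_exp_mul_smul_exp_smul_sub M μ, smul_mulVec]
  refine hprod.congr_right fun t => ?_
  rw [smul_eq_mul, ← Real.exp_add]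
  ring_nf

theorem Matrix.mem_spectrum_of_mem_maxGenEigenspace {M : Matrix ι ι ℂ} {μ : ℂ} {w : ι → ℂ}
    (hw : w ∈ Module.End.maxGenEigenspace (toLin' M) μ) (hw0 : w ≠ 0) : μ ∈ spectrum ℂ M := by
  obtain ⟨k, hk⟩ := (Module.End.mem_maxGenEigenspace _ _ _).mp hw
  have hgen : Module.End.HasGenEigenvalue (toLin' M) μ k :=
    (Submodule.ne_bot_iff _).mpr ⟨w, Module.End.mem_genEigenspace_nat.mpr hk, hw0⟩
  rw [← spectrum_toLin']
  exact (Module.End.hasEigenvalue_of_hasGenEigenvalue hgen).mem_spectrum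

theorem Matrix.isBigO_exp_smul_mulVec_of_forall_re_lt {M : Matrix ι ι ℂ} {c : ℝ}
    (hM : ∀ μ ∈ spectrum ℂ M, μ.re < c) (v : ι → ℂ) :
    (fun t : ℝ => exp (t • M) *ᵥ v) =O[atTop] fun t => Real.exp (c * t) := by
  have hv : v ∈ ⨆ μ, Module.End.maxGenEigenspace (toLin' M) μ := by
    rw [Module.End.iSup_maxGenEigenspace_eq_top]
    trivial
  refine Submodule.iSup_induction _
    (motive := fun v => (fun t : ℝ => exp (t • M) *ᵥ v) =O[atTop] fun t => Real.exp (c * t))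
    hv (fun μ w hw => ?_) (by simp only [mulVec_zero]; exact isBigO_zero _ _)
    fun v w hv hw => by simpa only [mulVec_add] using hv.add hw
  rcases eq_or_ne w 0 with rfl | hw0
  · simp only [mulVec_zero]
    exact isBigO_zero _ _
  · exact isBigO_exp_smul_mulVec_of_mem_maxGenEigenspace hw
      (hM μ (mem_spectrum_of_mem_maxGenEigenspace hw hw0))

theorem Matrix.exp_map_ofReal (A : Matrix ι ι ℝ) :
    exp (A.map Complex.ofReal) = (exp A).map Complex.ofReal :=
  (map_exp (Complex.ofRealHom.mapMatrix (m := ι))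
    (continuous_id.matrix_map Complex.continuous_ofReal) A).symm

theorem Matrix.isBigO_exp_smul_apply_of_forall_re_lt {A : Matrix ι ι ℝ} {c : ℝ}
    (hA : ∀ μ ∈ spectrum ℂ (A.map Complex.ofReal), μ.re < c) (i j : ι) :
    (fun t : ℝ => exp (t • A) i j) =O[atTop] fun t => Real.exp (c * t) := by
  refine (isBigO_of_le _ fun t => ?_).trans
    (isBigO_exp_smul_mulVec_of_forall_re_lt hA (Pi.single j 1))
  have hentry : (exp (t • A.map Complex.ofReal) *ᵥ Pi.single j 1) i = exp (t • A) i j := by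
    have hsmul : t • A.map Complex.ofReal = (t • A).map Complex.ofReal := by
      ext; simp [Complex.real_smul]
    rw [hsmul, exp_map_ofReal]
    simp
  calc ‖exp (t • A) i j‖ = ‖(exp (t • A.map Complex.ofReal) *ᵥ Pi.single j 1) i‖ := by
        rw [hentry, Complex.norm_real]
    _ ≤ _ := norm_le_pi_norm _ i

theorem Matrix.isBigO_exp_smul_of_forall_re_lt {A : Matrix ι ι ℝ} {c : ℝ}
    (hA : ∀ μ ∈ spectrum ℂ (A.map Complex.ofReal), μ.re < c) :
    (fun t : ℝ => exp (t • A)) =O[atTop] fun t => Real.exp (c * t) :=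
  isBigO_of_forall_isBigO_apply (isBigO_exp_smul_apply_of_forall_re_lt hA)

theorem Matrix.isBigO_exp_smul_transpose_of_forall_re_lt {A : Matrix ι ι ℝ} {c : ℝ}
    (hA : ∀ μ ∈ spectrum ℂ (A.map Complex.ofReal), μ.re < c) :
    (fun t : ℝ => exp (t • Aᵀ)) =O[atTop] fun t => Real.exp (c * t) := by
  refine isBigO_of_forall_isBigO_apply fun i j => ?_
  simp_rw [← transpose_smul, exp_transpose, transpose_apply]
  exact isBigO_exp_smul_apply_of_forall_re_lt hA j i

theorem Matrix.integrableOn_and_lyapunov_of_forall_re_neg {A : Matrix ι ι ℝ}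
    (hA : ∀ μ ∈ spectrum ℂ (A.map Complex.ofReal), μ.re < 0) (Q : Matrix ι ι ℝ) :
    (∀ i j, IntegrableOn (fun t : ℝ => (exp (t • Aᵀ) * Q * exp (t • A)) i j) (Ici 0)) ∧
      Aᵀ * (of fun i j => ∫ t in Ici (0 : ℝ), (exp (t • Aᵀ) * Q * exp (t • A)) i j) +
        (of fun i j => ∫ t in Ici (0 : ℝ), (exp (t • Aᵀ) * Q * exp (t • A)) i j) * A + Q = 0 := by
  obtain ⟨b, hb, hspec⟩ := (finite_spectrum _).exists_pos_forall_re_lt_neg hA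
  obtain ⟨hint, hlyap⟩ := integrableOn_and_lyapunov_of_isBigO_exp_smul hb
    (isBigO_exp_smul_of_forall_re_lt hspec) (isBigO_exp_smul_transpose_of_forall_re_lt hspec) Q
  let entry (i j : ι) : Matrix ι ι ℝ →L[ℝ] ℝ := (entryLinearMap ℝ ℝ i j).toContinuousLinearMap
  have hentry : (of fun i j => ∫ t in Ici (0 : ℝ), (exp (t • Aᵀ) * Q * exp (t • A)) i j) =
      ∫ t in Ioi (0 : ℝ), exp (t • Aᵀ) * Q * exp (t • A) := by
    ext i j
    rw [of_apply, integral_Ici_eq_integral_Ioi]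
    exact (entry i j).integral_comp_comm hint
  refine ⟨fun i j => (integrableOn_Ici_iff_integrableOn_Ioi).mpr ((entry i j).integrable_comp hint),
    ?_⟩
  rwa [hentry]

end MatrixExponential

/-- For a Hurwitz matrix `A`, the observability Gramian integral converges entrywise and
satisfies the Lyapunov equation `Aᵀ W_o + W_o A + Cᵀ C = 0`. -/
theorem obsGram_integrable_and_lyapunov {n m : ℕ} (A : Matrix (Fin n) (Fin n) ℝ)
    (C : Matrix (Fin m) (Fin n) ℝ) (hA : IsHurwitz A) :
    (∀ i j, IntegrableOn
        (fun t : ℝ => (exp (t • Aᵀ) * Cᵀ * C * exp (t • A)) i j) (Ici 0)) ∧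
    Aᵀ * obsGram A C + obsGram A C * A + Cᵀ * C = 0 := by
  have hassoc (t : ℝ) : exp (t • Aᵀ) * Cᵀ * C * exp (t • A) =
      exp (t • Aᵀ) * (Cᵀ * C) * exp (t • A) := by
    rw [Matrix.mul_assoc (exp (t • Aᵀ))]
  simpa only [obsGram, hassoc] using integrableOn_and_lyapunov_of_forall_re_neg hA (Cᵀ * C)
end

section
/- Let A be a real n×n matrix that is semistable with a simple zero eigenvalue, with right eigenvector u and left eigenvector w normalized so that wᵀ u = 1, and let C be a real m×n matrix with C u = 0. Then the observability Gramian integral ∫_0^∞ exp(Aᵀ t) Cᵀ C exp(A t) dt converges entrywise, even though A is not Hurwitz. -/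
/-!
Let `P = u wᵀ` and `B = A - P`. Since `A P = P A = 0`, `P` commutes with `B`, and `Cᵀ C P = 0`
because `C u = 0`; hence `Cᵀ C exp(tA) = Cᵀ C exp(tP) exp(tB) = Cᵀ C exp(tB)`, and the integrand is
`exp(tB)ᵀ Cᵀ C exp(tB)`. The rank-one correction moves the simple eigenvalue `0` of `A` to `-1` and
keeps the other eigenvalues, so every eigenvalue of `B` has negative real part. On a generalized
eigenspace of `B` for `μ`, `exp(tB)` acts as `e^{tμ}` times a polynomial in `t`, so `exp(tB)` decays
like `e^{-εt}` and the integrand like `e^{-2εt}`.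
-/

open MeasureTheory NormedSpace Set Matrix Filter Asymptotics
open scoped Nat Topology

section BanachAlgebra

variable {𝔸 : Type*} [NormedRing 𝔸] [NormedAlgebra ℚ 𝔸] [CompleteSpace 𝔸] {a x y : 𝔸}

theorem NormedSpace.mul_exp_eq_self_of_mul_eq_zero (h : a * x = 0) : a * exp x = a := by
  rw [exp_eq_tsum ℚ, ← (expSeries_summable' (𝕂 := ℚ) x).tsum_mul_left, tsum_eq_single 0]
  · simp
  · intro k hk
    obtain ⟨k, rfl⟩ := Nat.exists_eq_succ_of_ne_zero hk
    rw [mul_smul_comm, pow_succ', ← mul_assoc, h, zero_mul, smul_zero]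

theorem NormedSpace.mul_exp_add_eq_mul_exp (hxy : Commute x y) (h : a * x = 0) :
    a * exp (x + y) = a * exp y := by
  rw [exp_add_of_commute hxy, ← mul_assoc, mul_exp_eq_self_of_mul_eq_zero h]

end BanachAlgebra

theorem Complex.isBigO_exp_mul_mul_pow {μ : ℂ} {r : ℝ} (hμ : μ.re < r) (j : ℕ) :
    (fun t : ℝ => Complex.exp (t * μ) * (t : ℂ) ^ j) =O[atTop] fun t => Real.exp (r * t) := by
  have h := (isBigO_refl (fun t => Real.exp (μ.re * t)) atTop).mul
    (isLittleO_pow_exp_pos_mul_atTop j (sub_pos.mpr hμ)).isBigO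
  refine IsBigO.of_norm_left (h.congr' ?_ (Eventually.of_forall fun t => ?_))
  · filter_upwards [eventually_ge_atTop 0] with t ht
    simp [Complex.norm_exp, abs_of_nonneg ht, mul_comm]
  · simp only [← Real.exp_add]; ring_nf

namespace Matrix

variable {ι : Type*} [Fintype ι] [DecidableEq ι]

section Field

variable {K : Type*} [Field K] {A : Matrix ι ι K} {u w : ι → K}

theorem mem_spectrum_iff_exists_mulVec_eq_smul {μ : K} :
    μ ∈ spectrum K A ↔ ∃ v ≠ 0, A *ᵥ v = μ • v := by
  rw [← spectrum_toLin', ← Module.End.hasEigenvalue_iff_mem_spectrum,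
    Module.End.hasEigenvalue_iff, Submodule.ne_bot_iff]
  simp only [Module.End.mem_eigenspace_iff, toLin'_apply]
  exact ⟨fun ⟨v, hv, h0⟩ => ⟨v, h0, hv⟩, fun ⟨v, h0, hv⟩ => ⟨v, hv, h0⟩⟩

theorem eq_zero_of_mulVec_eq_zero_of_dotProduct_eq_zero
    (hmult : A.charpoly.rootMultiplicity 0 = 1) (hu : A *ᵥ u = 0) (hwu : w ⬝ᵥ u = 1)
    {v : ι → K} (hv : A *ᵥ v = 0) (hwv : w ⬝ᵥ v = 0) : v = 0 := by
  have hu0 : u ≠ 0 := by rintro rfl; simp at hwu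
  have hu_mem : u ∈ LinearMap.ker A.toLin' := by simpa using hu
  have hker : Module.finrank K (LinearMap.ker A.toLin') = 1 := by
    refine le_antisymm ?_ (Submodule.one_le_finrank_iff.mpr ?_)
    · have := LinearMap.finrank_eigenspace_le A.toLin' 0
      rwa [Module.End.eigenspace_zero, charpoly_toLin', hmult] at this
    · exact (Submodule.ne_bot_iff _).mpr ⟨u, hu_mem, hu0⟩
  obtain ⟨c, rfl⟩ := Submodule.mem_span_singleton.mp <|
    eq_span_singleton_of_mem_of_finrank_eq_one hker hu_mem hu0 ▸
      (show v ∈ LinearMap.ker A.toLin' by simpa using hv)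
  simp_all

theorem spectrum_sub_vecMulVec_subset (hmult : A.charpoly.rootMultiplicity 0 = 1)
    (hu : A *ᵥ u = 0) (hw : w ᵥ* A = 0) (hwu : w ⬝ᵥ u = 1) :
    spectrum K (A - vecMulVec u w) ⊆ insert (-1) (spectrum K A \ {0}) := by
  intro μ hμ
  obtain ⟨v, hv0, hv⟩ := mem_spectrum_iff_exists_mulVec_eq_smul.mp hμ
  rw [sub_mulVec, vecMulVec_mulVec, op_smul_eq_smul] at hv
  have hμwv : (μ + 1) * (w ⬝ᵥ v) = 0 := by
    have := congrArg (w ⬝ᵥ ·) hv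
    simp only [dotProduct_sub, dotProduct_smul, dotProduct_mulVec, hw, zero_dotProduct, hwu,
      smul_eq_mul] at this
    linear_combination -this
  rcases eq_or_ne μ (-1) with rfl | hμ1
  · exact mem_insert _ _
  have hwv : w ⬝ᵥ v = 0 :=
    (mul_eq_zero.mp hμwv).resolve_left fun h => hμ1 (eq_neg_of_add_eq_zero_left h)
  rw [hwv, zero_smul, sub_zero] at hv
  refine mem_insert_of_mem _ ⟨mem_spectrum_iff_exists_mulVec_eq_smul.mpr ⟨v, hv0, hv⟩, ?_⟩
  rintro rfl
  exact hv0 (eq_zero_of_mulVec_eq_zero_of_dotProduct_eq_zero hmult hu hwu (by simpa using hv) hwv)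

end Field

theorem re_lt_zero_of_mem_spectrum_map_sub_vecMulVec {A : Matrix ι ι ℝ} {u w : ι → ℝ}
    (hmult : A.charpoly.rootMultiplicity 0 = 1)
    (hspec : ∀ μ ∈ spectrum ℂ (A.map Complex.ofReal), μ ≠ 0 → μ.re < 0)
    (hu : A *ᵥ u = 0) (hw : w ᵥ* A = 0) (hwu : w ⬝ᵥ u = 1) :
    ∀ μ ∈ spectrum ℂ ((A - vecMulVec u w).map Complex.ofReal), μ.re < 0 := by
  set f := Complex.ofRealHom
  have hmult' : (A.map f).charpoly.rootMultiplicity 0 = 1 := by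
    rw [charpoly_map, ← map_zero f, ← Polynomial.eq_rootMultiplicity_map Complex.ofReal_injective,
      hmult]
  have hu' : A.map f *ᵥ (f ∘ u) = 0 := by
    ext i; simp [← RingHom.map_mulVec, hu]
  have hw' : (f ∘ w) ᵥ* A.map f = 0 := by
    ext i; simp [← RingHom.map_vecMul, hw]
  have hwu' : (f ∘ w) ⬝ᵥ (f ∘ u) = 1 := by
    rw [← RingHom.map_dotProduct, hwu, map_one]
  have hmap : (A - vecMulVec u w).map Complex.ofReal = A.map f - vecMulVec (f ∘ u) (f ∘ w) := by
    ext; simp [vecMulVec_apply, f]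
  intro μ hμ
  rw [hmap] at hμ
  rcases spectrum_sub_vecMulVec_subset hmult' hu' hw' hwu' hμ with rfl | ⟨hμA, hμ0⟩
  · norm_num
  · exact hspec μ hμA hμ0

theorem mul_exp_smul_sub_vecMulVec {A Q : Matrix ι ι ℝ} {u w : ι → ℝ} (hu : A *ᵥ u = 0)
    (hw : w ᵥ* A = 0) (hQ : Q *ᵥ u = 0) (t : ℝ) :
    Q * exp (t • (A - vecMulVec u w)) = Q * exp (t • A) := by
  have hcomm : Commute (vecMulVec u w) A := by
    simp [Commute, SemiconjBy, mul_vecMulVec, vecMulVec_mul, hu, hw]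
  have hQP : Q * (t • vecMulVec u w) = 0 := by simp [mul_vecMulVec, hQ]
  conv_rhs => rw [← sub_add_cancel A (vecMulVec u w), smul_add, add_comm]
  open scoped Matrix.Norms.Operator in
  exact (mul_exp_add_eq_mul_exp (((hcomm.sub_right (.refl _)).smul_left t).smul_right t) hQP).symm

theorem exp_smul_transpose_mul_mul_exp_smul_sub_vecMulVec {A Q : Matrix ι ι ℝ} {u w : ι → ℝ}
    (hu : A *ᵥ u = 0) (hw : w ᵥ* A = 0) (hQu : Q *ᵥ u = 0) (hQ : Q.IsSymm) (t : ℝ) :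
    exp (t • Aᵀ) * Q * exp (t • A) =
      (exp (t • (A - vecMulVec u w)))ᵀ * Q * exp (t • (A - vecMulVec u w)) := by
  have hQB := mul_exp_smul_sub_vecMulVec hu hw hQu t
  calc exp (t • Aᵀ) * Q * exp (t • A) = (Q * exp (t • A))ᵀ * exp (t • A) := by
        rw [transpose_mul, hQ.eq, ← exp_transpose, transpose_smul]
    _ = (exp (t • (A - vecMulVec u w)))ᵀ * (Q * exp (t • A)) := by
        nth_rw 1 [← hQB]; rw [transpose_mul, hQ.eq, Matrix.mul_assoc]
    _ = _ := by rw [Matrix.mul_assoc, hQB]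

theorem exp_mulVec_eq_sum_of_pow_mulVec_eq_zero_s15 {𝕂 : Type*} [RCLike 𝕂] {N : Matrix ι ι 𝕂}
    {y : ι → 𝕂} {k : ℕ} (h : N ^ k *ᵥ y = 0) :
    exp N *ᵥ y = ∑ j ∈ Finset.range k, (j ! : 𝕂)⁻¹ • (N ^ j *ᵥ y) := by
  have hs : HasSum (fun j => (j ! : 𝕂)⁻¹ • N ^ j) (exp N) := by
    open scoped Matrix.Norms.Operator in exact exp_series_hasSum_exp' N
  refine ((hs.map (mulVec.addMonoidHomLeft y) (continuous_id.matrix_mulVec continuous_const)).unique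
    (hasSum_sum_of_ne_finset_zero fun j hj => ?_)).trans (Finset.sum_congr rfl fun j _ => ?_)
  · obtain ⟨i, rfl⟩ := Nat.exists_eq_add_of_le' (not_lt.mp (Finset.mem_range.not.mp hj))
    simp [mulVec.addMonoidHomLeft, smul_mulVec, pow_add, ← mulVec_mulVec, h]
  · simp [mulVec.addMonoidHomLeft, smul_mulVec]

theorem exp_smul_one (c : ℂ) : exp (c • (1 : Matrix ι ι ℂ)) = Complex.exp c • 1 := by
  have h : exp (algebraMap ℂ (Matrix ι ι ℂ) c) = algebraMap ℂ _ (exp c) := by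
    open scoped Matrix.Norms.Operator in exact (algebraMap_exp_comm c).symm
  rwa [Algebra.algebraMap_eq_smul_one, Algebra.algebraMap_eq_smul_one, ← Complex.exp_eq_exp_ℂ] at h

theorem exp_smul_mulVec_of_mem_genEigenspace {B : Matrix ι ι ℂ} {μ : ℂ} {k : ℕ} {y : ι → ℂ}
    (hy : y ∈ Module.End.genEigenspace (toLin' B) μ k) (t : ℂ) :
    exp (t • B) *ᵥ y = ∑ j ∈ Finset.range k,
      (Complex.exp (t * μ) * t ^ j) • ((j ! : ℂ)⁻¹ • ((B - μ • 1) ^ j *ᵥ y)) := by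
  have hN : (t • (B - μ • 1)) ^ k *ᵥ y = 0 := by
    have h : toLinAlgEquiv' ((B - μ • 1) ^ k) y = 0 := by
      rw [map_pow, map_sub, map_smul, map_one]
      exact Module.End.mem_genEigenspace_nat.mp hy
    rw [smul_pow, smul_mulVec, ← toLinAlgEquiv'_apply, h, smul_zero]
  have hB : t • B = (t * μ) • 1 + t • (B - μ • 1) := by
    rw [smul_sub, smul_smul, add_sub_cancel]
  rw [hB, exp_add_of_commute _ _ ((Commute.one_left _).smul_left _), exp_smul_one,
    smul_mul_assoc, one_mul, smul_mulVec, exp_mulVec_eq_sum_of_pow_mulVec_eq_zero_s15 hN,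
    Finset.smul_sum]
  refine Finset.sum_congr rfl fun j _ => ?_
  rw [smul_pow, smul_mulVec, smul_comm _ (t ^ j), smul_smul, smul_smul]

theorem isBigO_exp_smul_mulVec {B : Matrix ι ι ℂ} {r : ℝ} (hr : ∀ μ ∈ spectrum ℂ B, μ.re < r)
    (x : ι → ℂ) : (fun t : ℝ => exp ((t : ℂ) • B) *ᵥ x) =O[atTop] fun t => Real.exp (r * t) := by
  have hx : x ∈ ⨆ μ, Module.End.maxGenEigenspace (toLin' B) μ := by
    rw [Module.End.iSup_maxGenEigenspace_eq_top]; trivial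
  induction hx using Submodule.iSup_induction' with
  | mem μ y hy =>
    obtain ⟨k, hk⟩ := (Module.End.mem_maxGenEigenspace _ _ _).mp hy
    rcases eq_or_ne y 0 with rfl | hy0
    · simp only [mulVec_zero]; exact isBigO_zero _ _
    have hk' : y ∈ Module.End.genEigenspace (toLin' B) μ k :=
      Module.End.mem_genEigenspace_nat.mpr hk
    have hμ : μ ∈ spectrum ℂ B := by
      rw [← spectrum_toLin']
      refine (Module.End.hasEigenvalue_of_hasGenEigenvalue (k := k) ?_).mem_spectrum
      exact Module.End.hasGenEigenvalue_iff.mpr ((Submodule.ne_bot_iff _).mpr ⟨y, hk', hy0⟩)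
    simp_rw [exp_smul_mulVec_of_mem_genEigenspace hk']
    refine IsBigO.fun_sum fun j _ => ?_
    simpa only [smul_eq_mul, mul_one] using (Complex.isBigO_exp_mul_mul_pow (hr μ hμ) j).smul
      (isBigO_const_const ((j ! : ℂ)⁻¹ • ((B - μ • 1) ^ j *ᵥ y)) (one_ne_zero (α := ℝ)) atTop)
  | zero => simp only [mulVec_zero]; exact isBigO_zero _ _
  | add y z _ _ hy hz => simpa [mulVec_add] using hy.add hz

theorem exp_map_ofReal_s15 (M : Matrix ι ι ℝ) :
    (exp M).map Complex.ofReal = exp (M.map Complex.ofReal) := by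
  open scoped Matrix.Norms.Operator in
  exact map_exp Complex.ofRealHom.mapMatrix (continuous_id.matrix_map Complex.continuous_ofReal) M

theorem exists_isBigO_exp_smul_apply {B : Matrix ι ι ℝ}
    (hB : ∀ μ ∈ spectrum ℂ (B.map Complex.ofReal), μ.re < 0) :
    ∃ ε > 0, ∀ i j, (fun t : ℝ => exp (t • B) i j) =O[atTop] fun t => Real.exp (-ε * t) := by
  -- the spectrum is finite, so a single rate `r < 0` bounds all real parts
  obtain ⟨r, hr, hr0⟩ : ∃ r : ℝ, (∀ μ ∈ spectrum ℂ (B.map Complex.ofReal), μ.re < r) ∧ r < 0 :=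
    (((finite_spectrum _).eventually_all.mpr fun μ hμ => eventually_gt_nhds (hB μ hμ)).filter_mono
      nhdsWithin_le_nhds |>.and self_mem_nhdsWithin).exists (f := 𝓝[<] (0 : ℝ))
  refine ⟨-r, neg_pos.mpr hr0, fun i j => ?_⟩
  refine IsBigO.trans (IsBigO.of_bound 1 (Eventually.of_forall fun t => ?_))
    ((isBigO_exp_smul_mulVec hr (Pi.single j 1)).congr_right fun t => by rw [neg_neg])
  have hexp : exp ((t : ℂ) • B.map Complex.ofReal) = (exp (t • B)).map Complex.ofReal := by
    rw [exp_map_ofReal_s15]; congr 1; ext; simp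
  calc ‖exp (t • B) i j‖ = ‖(exp ((t : ℂ) • B.map Complex.ofReal) *ᵥ Pi.single j 1) i‖ := by
        rw [hexp, mulVec_single_one, col_apply, map_apply, Complex.norm_real]
    _ ≤ 1 * ‖exp ((t : ℂ) • B.map Complex.ofReal) *ᵥ Pi.single j 1‖ := by
        rw [one_mul]; exact norm_le_pi_norm _ i

theorem isBigO_transpose_mul_mul_apply {α m n R : Type*} [Fintype m] [NormedCommRing R]
    {l : Filter α} {M : α → Matrix m n R} {g : α → ℝ} (Q : Matrix m m R)
    (hM : ∀ i j, (fun x => M x i j) =O[l] g) (i j : n) :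
    (fun x => ((M x)ᵀ * Q * M x) i j) =O[l] fun x => g x * g x := by
  simp only [mul_apply, transpose_apply, Finset.sum_mul]
  refine IsBigO.fun_sum fun k _ => IsBigO.fun_sum fun k' _ => ?_
  simpa using ((hM k' i).mul (isBigO_const_const (Q k' k) (one_ne_zero (α := ℝ)) l)).mul (hM k j)

end Matrix

/-- If `A` is semistable with a simple zero eigenvalue, with right eigenvector `u` and left
eigenvector `w` normalized so `wᵀ u = 1`, and `C u = 0`, then the observability Gramian
integral `∫_0^∞ exp(Aᵀ t) Cᵀ C exp(A t) dt` converges entrywise, even though `A` is not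
Hurwitz. -/
theorem semistable_obsGram_integrable {n m : ℕ} (A : Matrix (Fin n) (Fin n) ℝ)
    (u w : Fin n → ℝ)
    (hmult : A.charpoly.rootMultiplicity 0 = 1)
    (hspec : ∀ μ ∈ spectrum ℂ (A.map Complex.ofReal), μ ≠ 0 → μ.re < 0)
    (hu : A.mulVec u = 0) (hw : Aᵀ.mulVec w = 0) (hwu : w ⬝ᵥ u = 1)
    (C : Matrix (Fin m) (Fin n) ℝ) (hC : C.mulVec u = 0) :
    ∀ i j, IntegrableOn
      (fun t : ℝ => (NormedSpace.exp (t • Aᵀ) * Cᵀ * C * NormedSpace.exp (t • A)) i j) (Ici 0) := by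
  intro i j
  rw [mulVec_transpose] at hw
  obtain ⟨ε, hε, hdecay⟩ := exists_isBigO_exp_smul_apply
    (re_lt_zero_of_mem_spectrum_map_sub_vecMulVec hmult hspec hu hw hwu)
  have hgram (t : ℝ) : exp (t • Aᵀ) * Cᵀ * C * exp (t • A) =
      (exp (t • (A - vecMulVec u w)))ᵀ * (Cᵀ * C) * exp (t • (A - vecMulVec u w)) := by
    rw [Matrix.mul_assoc _ Cᵀ]
    exact exp_smul_transpose_mul_mul_exp_smul_sub_vecMulVec hu hw
      (by rw [← mulVec_mulVec, hC, mulVec_zero]) (by simp [IsSymm, transpose_mul]) t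
  have hexp : Continuous fun t : ℝ => exp (t • (A - vecMulVec u w)) := by
    open scoped Matrix.Norms.Operator in
    exact exp_continuous.comp (continuous_id.smul continuous_const)
  simp_rw [hgram]
  refine (integrableOn_Ici_iff_integrableOn_Ioi (by finiteness)).mpr <|
    integrable_of_isBigO_exp_neg (add_pos hε hε) ?_
      ((isBigO_transpose_mul_mul_apply _ hdecay i j).congr_right fun t => ?_)
  · exact (((hexp.matrix_transpose.matrix_mul continuous_const).matrix_mul hexp).matrix_elem
      i j).continuousOn
  · rw [← Real.exp_add]; ring_nf
end

section
/- Let A be a real n×n matrix that is semistable with a simple zero eigenvalue, with right eigenvector u and left eigenvector w normalized so that wᵀ u = 1. Then for real s > 0 the matrix s·I_n − A is invertible, and s · (s·I_n − A)⁻¹ → u wᵀ as s → 0⁺; i.e. the resolvent of A has a simple pole at s = 0 with residue u wᵀ. -/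
/-!
Since 0 is a simple root of the characteristic polynomial, `det (s • 1 - A) = s * q s` with
`q 0 ≠ 0`, so `s • (s • 1 - A)⁻¹ = (q s)⁻¹ • adj (s • 1 - A)` for `s ≠ 0`, which is continuous at
`0` with value `(q 0)⁻¹ • adj (-A)`. As `det (-A) = 0`, every column of `adj (-A)` lies in `ker A`,
and `adj (-A) = u tᵀ` (a second independent null vector would force `adj (-A) = 0`). Multiplying
`wᵀ (s • 1 - A) = s wᵀ` by the adjugate gives `wᵀ adj (s • 1 - A) = q s • wᵀ`, and at `s = 0`
this reads `t = q 0 • w`.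
-/

open Filter Matrix Polynomial Set Topology

lemma Polynomial.exists_eq_X_mul_of_rootMultiplicity_zero_eq_one {R : Type*} [CommRing R]
    {p : R[X]} (hp : p ≠ 0) (h : p.rootMultiplicity 0 = 1) :
    ∃ q : R[X], p = X * q ∧ q.eval 0 ≠ 0 := by
  obtain ⟨q, hpq, hndvd⟩ := exists_eq_pow_rootMultiplicity_mul_and_not_dvd p hp 0
  rw [h, pow_one, C_0, sub_zero] at hpq
  rw [C_0, sub_zero, X_dvd_iff, coeff_zero_eq_eval_zero] at hndvd
  exact ⟨q, hpq, hndvd⟩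

namespace Matrix

section CommRing

variable {R ι : Type*} [CommRing R] [Fintype ι] [DecidableEq ι]

lemma det_smul_one_sub (A : Matrix ι ι R) (s : R) : (s • 1 - A).det = A.charpoly.eval s := by
  rw [eval_charpoly, smul_one_eq_diagonal, scalar_apply]

lemma smul_vecMul_adjugate {B : Matrix ι ι R} {w : ι → R} {μ : R} (hw : w ᵥ* B = μ • w) :
    μ • (w ᵥ* B.adjugate) = B.det • w := by
  rw [← smul_vecMul, ← hw, vecMul_vecMul, mul_adjugate, vecMul_smul, vecMul_one]

end CommRing

section Field

variable {K ι : Type*} [Field K] [Fintype ι] [DecidableEq ι]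

lemma adjugate_apply_eq_zero_of_mulVec_eq_zero {B : Matrix ι ι K} {v : ι → K}
    (hv : B *ᵥ v = 0) (hv0 : v ≠ 0) {i : ι} (hvi : v i = 0) (j : ι) : B.adjugate i j = 0 := by
  rw [adjugate_apply]
  by_contra hd
  refine hv0 (eq_zero_of_mulVec_eq_zero hd ?_)
  funext k
  by_cases hk : k = j
  · subst hk; simp [mulVec, dotProduct, updateRow_apply, Pi.single_apply, hvi]
  · simpa [mulVec, dotProduct, updateRow_apply, hk] using congrFun hv k

/-- For each `i`, `v₁` or `v₁ i • v₂ - v₂ i • v₁` is a nonzero null vector vanishing at `i`. -/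
lemma adjugate_eq_zero_of_mulVec_eq_zero {B : Matrix ι ι K} {v₁ v₂ : ι → K}
    (h₁ : B *ᵥ v₁ = 0) (h₂ : B *ᵥ v₂ = 0) (hv₁ : v₁ ≠ 0) (hv₂ : v₂ ∉ K ∙ v₁) :
    B.adjugate = 0 := by
  ext i j
  by_cases h : v₁ i = 0
  · exact adjugate_apply_eq_zero_of_mulVec_eq_zero h₁ hv₁ h j
  refine adjugate_apply_eq_zero_of_mulVec_eq_zero (v := v₁ i • v₂ - v₂ i • v₁) ?_ ?_ ?_ j
  · simp [mulVec_sub, mulVec_smul, h₁, h₂]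
  · intro h0
    refine hv₂ (Submodule.mem_span_singleton.mpr ⟨(v₁ i)⁻¹ * v₂ i, ?_⟩)
    rw [mul_smul, ← sub_eq_zero.mp h0, smul_smul, inv_mul_cancel₀ h, one_smul]
  · simp [mul_comm]

lemma exists_adjugate_eq_vecMulVec {B : Matrix ι ι K} (hB : B.det = 0) {u : ι → K}
    (hu : B *ᵥ u = 0) (hu0 : u ≠ 0) : ∃ t : ι → K, B.adjugate = vecMulVec u t := by
  have hcol : ∀ j, B.adjugateᵀ j ∈ K ∙ u := by
    intro j
    by_contra hj
    have hc : B *ᵥ B.adjugateᵀ j = 0 := by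
      funext i
      simpa [hB, mul_apply, mulVec, dotProduct] using congrFun (congrFun (mul_adjugate B) i) j
    rw [adjugate_eq_zero_of_mulVec_eq_zero hu hc hu0 hj] at hj
    exact hj (Submodule.zero_mem _)
  choose t ht using fun j => Submodule.mem_span_singleton.mp (hcol j)
  refine ⟨t, ?_⟩
  ext i j
  simpa [vecMulVec_apply, mul_comm] using (congrFun (ht j) i).symm

/-- When `q.eval s = 0` both sides vanish, as `0⁻¹ = 0`. -/
lemma smul_inv_smul_one_sub {A : Matrix ι ι K} {q : K[X]} (hq : A.charpoly = X * q) {s : K}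
    (hs : s ≠ 0) : s • (s • 1 - A)⁻¹ = (q.eval s)⁻¹ • (s • 1 - A).adjugate := by
  rw [inv_def, det_smul_one_sub, hq, eval_mul, eval_X, Ring.inverse_eq_inv', smul_smul, mul_inv,
    ← mul_assoc, mul_inv_cancel₀ hs, one_mul]

end Field

section NormedField

variable {𝕜 ι : Type*} [NontriviallyNormedField 𝕜] [Fintype ι] [DecidableEq ι]

lemma continuous_adjugate_smul_one_sub (A : Matrix ι ι 𝕜) :
    Continuous fun s : 𝕜 => (s • 1 - A).adjugate :=
  ((continuous_id.smul continuous_const).sub continuous_const).matrix_adjugate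

/-- The identity is algebraic for `s ≠ 0` and extends to `s = 0` by continuity. -/
lemma vecMul_adjugate_smul_one_sub {A : Matrix ι ι 𝕜} {q : 𝕜[X]} (hq : A.charpoly = X * q)
    {w : ι → 𝕜} (hw : w ᵥ* A = 0) (s : 𝕜) : w ᵥ* (s • 1 - A).adjugate = q.eval s • w := by
  refine congrFun ((continuous_const.matrix_vecMul (continuous_adjugate_smul_one_sub A)).ext_on
    (dense_compl_singleton 0) (q.continuous.smul continuous_const) fun s (hs : s ≠ 0) => ?_) s
  have hws : w ᵥ* (s • 1 - A) = s • w := by rw [vecMul_sub, hw, sub_zero, vecMul_smul, vecMul_one]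
  refine smul_right_injective _ hs ?_
  change s • _ = s • (q.eval s • w)
  rw [smul_vecMul_adjugate hws, det_smul_one_sub, hq, eval_mul, eval_X, mul_smul]

lemma adjugate_neg_eq_smul_vecMulVec {A : Matrix ι ι 𝕜} {q : 𝕜[X]} (hq : A.charpoly = X * q)
    {u w : ι → 𝕜} (hu : A *ᵥ u = 0) (hw : w ᵥ* A = 0) (hwu : w ⬝ᵥ u = 1) :
    (-A).adjugate = q.eval 0 • vecMulVec u w := by
  have hu0 : u ≠ 0 := by rintro rfl; simp at hwu
  have hdet : (-A).det = 0 := by simpa [hq] using det_smul_one_sub A 0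
  obtain ⟨t, ht⟩ := exists_adjugate_eq_vecMulVec hdet (by rw [neg_mulVec, hu, neg_zero]) hu0
  have htw : t = q.eval 0 • w := by
    simpa [ht, vecMul_vecMulVec, hwu] using vecMul_adjugate_smul_one_sub hq hw 0
  rw [ht, htw, vecMulVec_smul]

lemma tendsto_smul_inv_smul_one_sub {A : Matrix ι ι 𝕜} {q : 𝕜[X]} (hq : A.charpoly = X * q)
    (hq0 : q.eval 0 ≠ 0) :
    Tendsto (fun s : 𝕜 => s • (s • 1 - A)⁻¹) (𝓝[≠] 0) (𝓝 ((q.eval 0)⁻¹ • (-A).adjugate)) := by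
  have hcont : ContinuousAt (fun s : 𝕜 => (q.eval s)⁻¹ • (s • 1 - A).adjugate) 0 :=
    (q.continuous.continuousAt.inv₀ hq0).smul (continuous_adjugate_smul_one_sub A).continuousAt
  have h := tendsto_nhdsWithin_of_tendsto_nhds (s := {0}ᶜ) hcont.tendsto
  rw [zero_smul, zero_sub] at h
  exact h.congr' (eventually_nhdsWithin_of_forall fun s hs => (smul_inv_smul_one_sub hq hs).symm)

end NormedField

lemma isUnit_smul_one_sub_of_notMem_spectrum {ι : Type*} [Fintype ι] [DecidableEq ι]
    (A : Matrix ι ι ℝ) {s : ℝ} (hs : (s : ℂ) ∉ spectrum ℂ (A.map Complex.ofReal)) :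
    IsUnit (s • 1 - A) := by
  rw [spectrum.notMem_iff] at hs
  have hmap : algebraMap ℂ (Matrix ι ι ℂ) s - A.map Complex.ofReal
      = (s • 1 - A).map Complex.ofReal := by
    ext i j
    by_cases h : i = j <;> simp [algebraMap_matrix_apply, h]
  rw [hmap, isUnit_iff_isUnit_det, isUnit_iff_ne_zero] at hs
  rw [isUnit_iff_isUnit_det, isUnit_iff_ne_zero]
  intro h0
  have hdet := RingHom.map_det Complex.ofRealHom (s • 1 - A)
  rw [h0, map_zero] at hdet
  exact hs hdet.symm

end Matrix

/-- If `A` is semistable with a simple zero eigenvalue, with right eigenvector `u` and left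
eigenvector `w` normalized so `wᵀ u = 1`, then for real `s > 0` the matrix `s I − A` is
invertible and `s (s I − A)⁻¹ → u wᵀ` as `s → 0⁺`: the resolvent of `A` has a simple pole
at `s = 0` with residue `u wᵀ`. -/
theorem semistable_resolvent_simple_pole {n : ℕ} (A : Matrix (Fin n) (Fin n) ℝ)
    (u w : Fin n → ℝ)
    (hmult : A.charpoly.rootMultiplicity 0 = 1)
    (hspec : ∀ μ ∈ spectrum ℂ (A.map Complex.ofReal), μ ≠ 0 → μ.re < 0)
    (hu : A.mulVec u = 0) (hw : Aᵀ.mulVec w = 0) (hwu : w ⬝ᵥ u = 1) :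
    (∀ s : ℝ, 0 < s → IsUnit (s • (1 : Matrix (Fin n) (Fin n) ℝ) - A)) ∧
    Tendsto (fun s : ℝ => s • (s • (1 : Matrix (Fin n) (Fin n) ℝ) - A)⁻¹)
      (nhdsWithin 0 (Ioi 0)) (nhds (vecMulVec u w)) := by
  obtain ⟨q, hq, hq0⟩ :=
    exists_eq_X_mul_of_rootMultiplicity_zero_eq_one A.charpoly_monic.ne_zero hmult
  refine ⟨fun s hs => isUnit_smul_one_sub_of_notMem_spectrum A fun hmem => ?_, ?_⟩
  · exact hs.not_gt (by simpa using hspec _ hmem (by exact_mod_cast hs.ne'))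
  · have hwA : w ᵥ* A = 0 := by rwa [← mulVec_transpose]
    have h := (tendsto_smul_inv_smul_one_sub hq hq0).mono_left
      (nhdsWithin_mono _ fun s (hs : 0 < s) => hs.ne')
    rwa [adjugate_neg_eq_smul_vecMulVec hq hu hwA hwu, smul_smul, inv_mul_cancel₀ hq0,
      one_smul] at h
end
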